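/- arXiv:2402.18904 — 2 statements merged into one kernel-verified Lean document; each statement's English description precedes it below -/
import Mathlib

section
/- Let T1 and T2 be independent identically distributed real random variables, each symmetric about 0 with P(T1 = 0) = 0. Then the mirror statistic M = sign(T1·T2)(|T1| + |T2|) is symmetric about 0. -/
/-!
Replacing `T1` by `-T1` leaves the joint law of `(T1, T2)` unchanged, by symmetry of `T1` and
independence, while the mirror statistic is odd in its first argument; so `M` and `-M` have the
same law.
-/

open MeasureTheory ProbabilityTheory

lemma Real.measurable_sign : Measurable Real.sign :=
  Measurable.ite measurableSet_Iio measurable_const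
    (Measurable.ite measurableSet_Ioi measurable_const measurable_const)

noncomputable def mirrorStat (a b : ℝ) : ℝ := Real.sign (a * b) * (|a| + |b|)

lemma measurable_mirrorStat : Measurable (Function.uncurry mirrorStat) :=
  (Real.measurable_sign.comp (measurable_fst.mul measurable_snd)).mul
    (measurable_fst.abs.add measurable_snd.abs)

lemma mirrorStat_neg_left (a b : ℝ) : mirrorStat (-a) b = -mirrorStat a b := by
  rw [mirrorStat, mirrorStat, neg_mul, Real.sign_neg, abs_neg, neg_mul]

lemma ProbabilityTheory.IndepFun.identDistrib_prodMk_comp_left {Ω E F : Type*}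
    {mΩ : MeasurableSpace Ω} {mE : MeasurableSpace E} {mF : MeasurableSpace F}
    {μ : Measure Ω} [IsFiniteMeasure μ] {X : Ω → E} {Y : Ω → F} {g : E → E}
    (hXY : X ⟂ᵢ[μ] Y) (hY : AEMeasurable Y μ) (hg : Measurable g)
    (hgX : IdentDistrib X (g ∘ X) μ μ) :
    IdentDistrib (fun ω ↦ (X ω, Y ω)) (fun ω ↦ (g (X ω), Y ω)) μ μ :=
  hgX.prodMk (.refl hY) hXY (hXY.comp hg measurable_id)

theorem stmt_14_general {Ω : Type*} [MeasurableSpace Ω] (μ : Measure Ω) [IsProbabilityMeasure μ]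
    (T1 T2 : Ω → ℝ) (hT1 : Measurable T1) (hT2 : Measurable T2)
    (hindep : IndepFun T1 T2 μ)
    (hsym : μ.map T1 = μ.map (fun ω => -T1 ω)) :
    μ.map (fun ω => Real.sign (T1 ω * T2 ω) * (|T1 ω| + |T2 ω|)) =
      μ.map (fun ω => -(Real.sign (T1 ω * T2 ω) * (|T1 ω| + |T2 ω|))) := by
  have hT1_symm : IdentDistrib T1 (fun ω => -T1 ω) μ μ :=
    ⟨hT1.aemeasurable, hT1.neg.aemeasurable, hsym⟩
  have hpair := hindep.identDistrib_prodMk_comp_left hT2.aemeasurable measurable_neg hT1_symm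
  have hmirror := (hpair.comp measurable_mirrorStat).map_eq
  simp only [Function.comp_def, Function.uncurry_apply_pair, mirrorStat_neg_left] at hmirror
  exact hmirror

theorem stmt_14 {Ω : Type*} [MeasurableSpace Ω] (μ : Measure Ω) [IsProbabilityMeasure μ]
    (T1 T2 : Ω → ℝ) (hT1 : Measurable T1) (hT2 : Measurable T2)
    (hindep : IndepFun T1 T2 μ)
    (hiid : μ.map T1 = μ.map T2)
    (hsym : μ.map T1 = μ.map (fun ω => -T1 ω))
    (hzero : μ {ω | T1 ω = 0} = 0) :
    μ.map (fun ω => Real.sign (T1 ω * T2 ω) * (|T1 ω| + |T2 ω|)) =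
      μ.map (fun ω => -(Real.sign (T1 ω * T2 ω) * (|T1 ω| + |T2 ω|))) :=
  stmt_14_general μ T1 T2 hT1 hT2 hindep hsym
end

section
/- Let (T1, T2) and (T1', T2') be two independent copies of a planar random vector whose two coordinates are independent, each symmetric about 0, and almost surely nonzero. Writing each vector in polar coordinates (r, θ) and (r', θ'), the statistic M = cos(θ - θ')·r·r' is symmetric about 0 — that is, P(M > t) = P(M < -t) for all t > 0. -/
/-!
Negating the first vector does not change the joint law of the two vectors: its coordinates are
independent and symmetric, so `(T1, T2)` and `(-T1, -T2)` have the same law, and the second vector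
is independent of the first. The inner product is odd in the first vector, hence `M` and `-M` are
identically distributed.
-/

open MeasureTheory ProbabilityTheory

namespace ProbabilityTheory

variable {Ω E F G : Type*} [MeasurableSpace Ω] {μ : Measure Ω}
  [MeasurableSpace E] [MeasurableSpace F] [MeasurableSpace G]

lemma IdentDistrib.prodMk_neg [IsFiniteMeasure μ] [Neg E] [MeasurableNeg E] [Neg F]
    [MeasurableNeg F] {X : Ω → E} {Y : Ω → F}
    (hX : IdentDistrib X (-X) μ μ) (hY : IdentDistrib Y (-Y) μ μ) (hXY : X ⟂ᵢ[μ] Y) :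
    IdentDistrib (fun ω ↦ (X ω, Y ω)) (-fun ω ↦ (X ω, Y ω)) μ μ :=
  hX.prodMk hY hXY (hXY.comp measurable_neg measurable_neg)

lemma IdentDistrib.neg_of_odd_left [IsFiniteMeasure μ] [Neg E] [MeasurableNeg E] [Neg G]
    {X : Ω → E} {Y : Ω → F} (hX : IdentDistrib X (-X) μ μ) (hY : AEMeasurable Y μ)
    (hXY : X ⟂ᵢ[μ] Y) {g : E → F → G} (hg : Measurable (Function.uncurry g))
    (hodd : ∀ x y, g (-x) y = -g x y) :
    IdentDistrib (fun ω ↦ g (X ω) (Y ω)) (-fun ω ↦ g (X ω) (Y ω)) μ μ := by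
  have hjoint : IdentDistrib (fun ω ↦ (X ω, Y ω)) (fun ω ↦ (-X ω, Y ω)) μ μ :=
    hX.prodMk (IdentDistrib.refl hY) hXY (hXY.comp measurable_neg measurable_id)
  have hneg : (Function.uncurry g ∘ fun ω ↦ (-X ω, Y ω)) = -fun ω ↦ g (X ω) (Y ω) :=
    funext fun ω ↦ hodd (X ω) (Y ω)
  exact hneg ▸ hjoint.comp hg

lemma IdentDistrib.measure_gt_eq_measure_lt_neg {X : Ω → ℝ} (hX : IdentDistrib X (-X) μ μ)
    (t : ℝ) : μ {ω | X ω > t} = μ {ω | X ω < -t} := by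
  have hlt : {ω | X ω < -t} = (-X) ⁻¹' Set.Ioi t := by
    ext ω; exact lt_neg (a := X ω)
  rw [hlt]
  exact hX.measure_mem_eq measurableSet_Ioi

end ProbabilityTheory

/-- In polar coordinates, `cos (θ - θ') * r * r'` is the inner product `T1 * T1' + T2 * T2'`. -/
theorem stmt_15_general {Ω : Type*} [MeasurableSpace Ω] (μ : Measure Ω) [IsProbabilityMeasure μ]
    (T1 T2 T1' T2' : Ω → ℝ)
    (hT1 : Measurable T1) (hT2 : Measurable T2)
    (hT1' : Measurable T1') (hT2' : Measurable T2')
    -- each vector has independent coordinates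
    (hcoord : IndepFun T1 T2 μ)
    -- each coordinate is symmetric about 0
    (hsym1 : μ.map T1 = μ.map (fun ω => -T1 ω))
    (hsym2 : μ.map T2 = μ.map (fun ω => -T2 ω))
    -- the two vectors are independent copies of each other
    (hvecindep : IndepFun (fun ω => (T1 ω, T2 ω)) (fun ω => (T1' ω, T2' ω)) μ) :
    ∀ t : ℝ, 0 < t →
      μ {ω | T1 ω * T1' ω + T2 ω * T2' ω > t} =
        μ {ω | T1 ω * T1' ω + T2 ω * T2' ω < -t} := by
  intro t _
  have hsymV : IdentDistrib (fun ω ↦ (T1 ω, T2 ω)) (-fun ω ↦ (T1 ω, T2 ω)) μ μ :=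
    IdentDistrib.prodMk_neg ⟨hT1.aemeasurable, hT1.neg.aemeasurable, hsym1⟩
      ⟨hT2.aemeasurable, hT2.neg.aemeasurable, hsym2⟩ hcoord
  have hodd : ∀ x y : ℝ × ℝ, (-x).1 * y.1 + (-x).2 * y.2 = -(x.1 * y.1 + x.2 * y.2) :=
    fun x y ↦ by simp only [Prod.fst_neg, Prod.snd_neg]; ring
  have hsymM := hsymV.neg_of_odd_left (hT1'.prodMk hT2').aemeasurable hvecindep
    (g := fun x y ↦ x.1 * y.1 + x.2 * y.2) (by fun_prop) hodd
  exact hsymM.measure_gt_eq_measure_lt_neg t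

/-- The unified mirror statistic `M = cos (θ - θ') * r * r'` is the Euclidean inner product
`T1 * T1' + T2 * T2'` of the two planar vectors; under the null it is symmetric about 0. -/
theorem stmt_15 {Ω : Type*} [MeasurableSpace Ω] (μ : Measure Ω) [IsProbabilityMeasure μ]
    (T1 T2 T1' T2' : Ω → ℝ)
    (hT1 : Measurable T1) (hT2 : Measurable T2)
    (hT1' : Measurable T1') (hT2' : Measurable T2')
    -- each vector has independent coordinates
    (hcoord : IndepFun T1 T2 μ) (hcoord' : IndepFun T1' T2' μ)
    -- each coordinate is symmetric about 0
    (hsym1 : μ.map T1 = μ.map (fun ω => -T1 ω))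
    (hsym2 : μ.map T2 = μ.map (fun ω => -T2 ω))
    (hsym1' : μ.map T1' = μ.map (fun ω => -T1' ω))
    (hsym2' : μ.map T2' = μ.map (fun ω => -T2' ω))
    -- the two vectors are independent copies of each other
    (hvecindep : IndepFun (fun ω => (T1 ω, T2 ω)) (fun ω => (T1' ω, T2' ω)) μ)
    (hcopy : μ.map (fun ω => (T1 ω, T2 ω)) = μ.map (fun ω => (T1' ω, T2' ω)))
    -- almost surely nonzero
    (hne : ∀ᵐ ω ∂μ, (T1 ω, T2 ω) ≠ (0, 0))
    (hne' : ∀ᵐ ω ∂μ, (T1' ω, T2' ω) ≠ (0, 0)) :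
    ∀ t : ℝ, 0 < t →
      μ {ω | T1 ω * T1' ω + T2 ω * T2' ω > t} =
        μ {ω | T1 ω * T1' ω + T2 ω * T2' ω < -t} :=
  stmt_15_general μ T1 T2 T1' T2' hT1 hT2 hT1' hT2' hcoord hsym1 hsym2 hvecindep
end
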